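/- arXiv:2502.00915 — 5 statements merged into one kernel-verified Lean document; each statement's English description precedes it below -/
import Mathlib

section
/- Let F : Δ_A → [0,1]^K be L-Lipschitz. Fix mixed strategies (π¹, …, π^N) ∈ Δ_A^N, let the actions a^j ∈ A be independent with a^j distributed according to π^j, and let μ̂ = (1/N)∑_{j=1}^N e_{a^j}. Then for every player i, | V^i(π¹, …, π^N) − (π^i)ᵀ E[F(μ̂)] | ≤ L√2 / N. -/
/-!
Resampling player `i`'s action from `πⁱ`, independently of everything else, does not change the
law of the action profile. Hence `Vⁱ` is also the expectation of `F(μ̂')(b)`, where `b ∼ πⁱ` is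
independent and `μ̂'` is the empirical measure with `aⁱ` replaced by `b`, while
`(πⁱ)ᵀ E[F(μ̂)]` is the expectation of `F(μ̂)(b)`. Replacing one action moves the empirical measure
by `(e_b - e_{aⁱ}) / N`, of norm at most `√2 / N`, so by Lipschitz continuity the two integrands
differ by at most `L√2 / N` pointwise.
-/

open scoped BigOperators
open MeasureTheory ProbabilityTheory Finset

noncomputable section

/-- The probability simplex over `Fin K`, inside Euclidean space (ℓ2 norm). -/
def simplex (K : ℕ) : Set (EuclideanSpace ℝ (Fin K)) :=
  {x | (∀ a, 0 ≤ x a) ∧ ∑ a, x a = 1}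

/-- Empirical occupancy measure `μ̂ = (1/N) ∑_j e_{a^j}` of an action profile. -/
def empDist (K N : ℕ) (v : Fin N → Fin K) : EuclideanSpace ℝ (Fin K) :=
  (N : ℝ)⁻¹ • ∑ j : Fin N, EuclideanSpace.single (v j) (1 : ℝ)

/-- Expected payoff `V^i(π¹,…,π^N) = E[F(μ̂)(a^i)]`, written as the finite sum over
action profiles weighted by the product of the independent mixed strategies. -/
def Vval (K N : ℕ) (F : EuclideanSpace ℝ (Fin K) → EuclideanSpace ℝ (Fin K))
    (π : Fin N → EuclideanSpace ℝ (Fin K)) (i : Fin N) : ℝ :=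
  ∑ v : Fin N → Fin K, (∏ j : Fin N, π j (v j)) * F (empDist K N v) (v i)

/-- Exploitability `E^i_exp(π¹,…,π^N) = sup_{π′∈Δ} V^i(π′,π^{−i}) − V^i(π¹,…,π^N)`. -/
def expl (K N : ℕ) (F : EuclideanSpace ℝ (Fin K) → EuclideanSpace ℝ (Fin K))
    (π : Fin N → EuclideanSpace ℝ (Fin K)) (i : Fin N) : ℝ :=
  (⨆ p : simplex K, Vval K N F (Function.update π i (p : EuclideanSpace ℝ (Fin K))) i)
    - Vval K N F π i

open Function

lemma Orthonormal.norm_sub_le_sqrt_two {ι E : Type*} [NormedAddCommGroup E]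
    [InnerProductSpace ℝ E] {v : ι → E} (hv : Orthonormal ℝ v) (a b : ι) :
    ‖v a - v b‖ ≤ √2 := by
  classical
  have hinner : 0 ≤ inner ℝ (v a) (v b) := by
    rw [orthonormal_iff_ite.mp hv a b]
    split_ifs <;> norm_num
  apply Real.le_sqrt_of_sq_le
  rw [norm_sub_sq_real, hv.1 a, hv.1 b]
  linarith

lemma Finset.abs_sum_mul_le_of_sum_eq_one {β : Type*} (s : Finset β) {w f : β → ℝ} {c : ℝ}
    (hw : ∀ x ∈ s, 0 ≤ w x) (hw1 : ∑ x ∈ s, w x = 1) (hf : ∀ x ∈ s, |f x| ≤ c) :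
    |∑ x ∈ s, w x * f x| ≤ c :=
  calc |∑ x ∈ s, w x * f x| ≤ ∑ x ∈ s, w x * |f x| := by
        refine (abs_sum_le_sum_abs _ _).trans_eq (sum_congr rfl fun x hx => ?_)
        rw [abs_mul, abs_of_nonneg (hw x hx)]
    _ ≤ ∑ x ∈ s, w x * c := sum_le_sum fun x hx => mul_le_mul_of_nonneg_left (hf x hx) (hw x hx)
    _ = c := by rw [← sum_mul, hw1, one_mul]

section Resampling

variable {ι α : Type*} [Fintype ι] [DecidableEq ι]

lemma prod_update_mul_apply {M : Type*} [CommMonoid M] (p : ι → α → M) (v : ι → α) (i : ι)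
    (b : α) : (∏ j, p j (update v i b j)) * p i (v i) = (∏ j, p j (v j)) * p i b := by
  rw [← mul_prod_erase univ _ (mem_univ i), ← mul_prod_erase univ _ (mem_univ i),
    update_self, prod_congr rfl fun j hj => by rw [update_of_ne (ne_of_mem_erase hj)]]
  ac_rfl

lemma sum_prod_mul_sum_update [Fintype α] {R : Type*} [CommSemiring R] (p : ι → α → R) (i : ι)
    (g : (ι → α) → R) :
    ∑ v, (∏ j, p j (v j)) * ∑ b, p i b * g (update v i b)
      = (∑ b, p i b) * ∑ v, (∏ j, p j (v j)) * g v := by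
  let σ : Equiv.Perm ((ι → α) × α) :=
    Involutive.toPerm (fun x => (update x.1 i x.2, x.1 i)) fun x => by simp
  calc ∑ v, (∏ j, p j (v j)) * ∑ b, p i b * g (update v i b)
      = ∑ x : (ι → α) × α, (∏ j, p j (x.1 j)) * p i x.2 * g (update x.1 i x.2) := by
        simp only [Fintype.sum_prod_type, mul_sum, mul_assoc]
    _ = ∑ x : (ι → α) × α, (∏ j, p j (x.1 j)) * p i x.2 * g x.1 := by
        rw [← Equiv.sum_comp σ]
        refine sum_congr rfl fun ⟨v, b⟩ _ => ?_
        change (∏ j, p j (update v i b j)) * p i (v i) * g (update (update v i b) i (v i)) = _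
        rw [update_idem, update_eq_self, prod_update_mul_apply]
    _ = (∑ b, p i b) * ∑ v, (∏ j, p j (v j)) * g v := by
        simp only [Fintype.sum_prod_type, mul_sum, ← sum_mul]
        exact sum_congr rfl fun v _ => by rw [← mul_sum]; ring

end Resampling

section EmpiricalDistribution

variable {K N : ℕ}

lemma empDist_apply (v : Fin N → Fin K) (a : Fin K) :
    empDist K N v a = (#{j | v j = a} : ℝ) / N := by
  simp [empDist, div_eq_inv_mul, Pi.single_apply, Finset.sum_boole, eq_comm]

lemma empDist_mem_simplex (hN : 0 < N) (v : Fin N → Fin K) : empDist K N v ∈ simplex K := by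
  refine ⟨fun a => by rw [empDist_apply]; positivity, ?_⟩
  simp_rw [empDist_apply, ← sum_div, ← Nat.cast_sum,
    ← card_eq_sum_card_fiberwise fun j _ => mem_univ (v j), card_univ, Fintype.card_fin]
  exact div_self (Nat.cast_ne_zero.mpr hN.ne')

lemma empDist_update_sub (v : Fin N → Fin K) (i : Fin N) (b : Fin K) :
    empDist K N (update v i b) - empDist K N v
      = (N : ℝ)⁻¹ • (EuclideanSpace.single b 1 - EuclideanSpace.single (v i) 1) := by
  rw [empDist, empDist, ← smul_sub]
  congr 1
  simp_rw [apply_update (fun _ a => EuclideanSpace.single a (1 : ℝ))]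
  rw [sum_update_of_mem (mem_univ i), sum_eq_add_sum_sdiff_singleton_of_mem (mem_univ i)]
  abel

lemma norm_empDist_update_sub_le (v : Fin N → Fin K) (i : Fin N) (b : Fin K) :
    ‖empDist K N (update v i b) - empDist K N v‖ ≤ √2 / N := by
  rw [empDist_update_sub, norm_smul, norm_inv, RCLike.norm_natCast, inv_mul_eq_div]
  gcongr
  exact (EuclideanSpace.orthonormal_single (𝕜 := ℝ) (ι := Fin K)).norm_sub_le_sqrt_two b (v i)

lemma abs_apply_empDist_update_sub_le {L : ℝ} (hL : 0 ≤ L)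
    {F : EuclideanSpace ℝ (Fin K) → EuclideanSpace ℝ (Fin K)}
    (hF : ∀ μ ∈ simplex K, ∀ μ' ∈ simplex K, ‖F μ - F μ'‖ ≤ L * ‖μ - μ'‖)
    (v : Fin N → Fin K) (i : Fin N) (b a : Fin K) :
    |F (empDist K N (update v i b)) a - F (empDist K N v) a| ≤ L * √2 / N :=
  calc |F (empDist K N (update v i b)) a - F (empDist K N v) a|
      ≤ ‖F (empDist K N (update v i b)) - F (empDist K N v)‖ := by
        simpa only [Real.norm_eq_abs, PiLp.sub_apply] using PiLp.norm_apply_le (F _ - F _) a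
    _ ≤ L * ‖empDist K N (update v i b) - empDist K N v‖ :=
        hF _ (empDist_mem_simplex i.pos _) _ (empDist_mem_simplex i.pos _)
    _ ≤ L * (√2 / N) := by gcongr; exact norm_empDist_update_sub_le v i b
    _ = L * √2 / N := (mul_div_assoc ..).symm

end EmpiricalDistribution

theorem stmt0_general (K N : ℕ) (L : ℝ) (hL : 0 ≤ L)
    (F : EuclideanSpace ℝ (Fin K) → EuclideanSpace ℝ (Fin K))
    (hFlip : ∀ μ ∈ simplex K, ∀ μ' ∈ simplex K, ‖F μ - F μ'‖ ≤ L * ‖μ - μ'‖)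
    (π : Fin N → EuclideanSpace ℝ (Fin K)) (hπ : ∀ j, π j ∈ simplex K) (i : Fin N) :
    |Vval K N F π i -
        ∑ a : Fin K, π i a *
          (∑ v : Fin N → Fin K, (∏ j : Fin N, π j (v j)) * F (empDist K N v) a)|
      ≤ L * Real.sqrt 2 / N := by
  set W : (Fin N → Fin K) → ℝ := fun v => ∏ j, π j (v j)
  have hW : ∑ v, W v = 1 := by simp [W, ← Fintype.prod_sum, (hπ _).2]
  have hV : Vval K N F π i = ∑ v, W v * ∑ b, π i b * F (empDist K N (update v i b)) b := by
    have h := sum_prod_mul_sum_update (fun j a => π j a) i fun w => F (empDist K N w) (w i)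
    simp only [update_self, (hπ i).2, one_mul] at h
    exact h.symm
  have hmean : ∑ a, π i a * ∑ v, W v * F (empDist K N v) a
      = ∑ v, W v * ∑ b, π i b * F (empDist K N v) b := by
    simp_rw [mul_sum]
    rw [sum_comm]
    exact sum_congr rfl fun _ _ => sum_congr rfl fun _ _ => by ring
  rw [hV, hmean, ← sum_sub_distrib]
  simp_rw [← mul_sub, ← sum_sub_distrib, ← mul_sub]
  refine abs_sum_mul_le_of_sum_eq_one _ (fun v _ => prod_nonneg fun j _ => (hπ j).1 _) hW
    fun v _ => abs_sum_mul_le_of_sum_eq_one _ (fun b _ => (hπ i).1 b) (hπ i).2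
      fun b _ => abs_apply_empDist_update_sub_le hL hFlip v i b b

/-- Lemma 1 of the paper.
If `F : Δ_A → [0,1]^K` is `L`-Lipschitz, then for any strategy profile `(π¹,…,π^N)` and any
player `i`, `|V^i(π¹,…,π^N) − (π^i)ᵀ E[F(μ̂)]| ≤ L√2/N`, where `μ̂` is the empirical measure of
independent actions `a^j ∼ π^j` and `E[F(μ̂)] = ∑_v (∏_j π^j(v_j)) F(μ̂(v))`. -/
theorem stmt0 (K N : ℕ) (hK : 0 < K) (hN : 0 < N) (L : ℝ) (hL : 0 ≤ L)
    (F : EuclideanSpace ℝ (Fin K) → EuclideanSpace ℝ (Fin K))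
    (hFmap : ∀ μ ∈ simplex K, ∀ a : Fin K, F μ a ∈ Set.Icc (0 : ℝ) 1)
    (hFlip : ∀ μ ∈ simplex K, ∀ μ' ∈ simplex K, ‖F μ - F μ'‖ ≤ L * ‖μ - μ'‖)
    (π : Fin N → EuclideanSpace ℝ (Fin K)) (hπ : ∀ j, π j ∈ simplex K) (i : Fin N) :
    |Vval K N F π i -
        ∑ a : Fin K, π i a *
          (∑ v : Fin N → Fin K, (∏ j : Fin N, π j (v j)) * F (empDist K N v) a)|
      ≤ L * Real.sqrt 2 / N :=
  stmt0_general K N L hL F hFlip π hπ i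
end
end

section
/- Let F : Δ_A → [0,1]^K, let τ > 0, and let π*_τ ∈ Δ_A satisfy the τ-Tikhonov-regularized variational inequality (F(π*_τ) − τπ*_τ)ᵀ(π*_τ − π) ≥ 0 for all π ∈ Δ_A. Then π*_τ is a 2τ-MF-NE of F, i.e., ∑_a π*_τ(a) F(π*_τ, a) ≥ max_{π∈Δ_A} ∑_a π(a) F(π*_τ, a) − 2τ. -/
open scoped BigOperators
open MeasureTheory ProbabilityTheory Finset

noncomputable section

theorem mem_simplex_iff {K : ℕ} {x : EuclideanSpace ℝ (Fin K)} :
    x ∈ simplex K ↔ ⇑x ∈ stdSimplex ℝ (Fin K) :=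
  Iff.rfl

theorem sum_mul_le_one_of_mem_stdSimplex {ι : Type*} [Fintype ι] {p q : ι → ℝ}
    (hp : p ∈ stdSimplex ℝ ι) (hq : q ∈ stdSimplex ℝ ι) : ∑ i, p i * q i ≤ 1 :=
  calc ∑ i, p i * q i ≤ ∑ i, q i :=
        sum_le_sum fun i _ => mul_le_of_le_one_left (hq.1 i) (mem_Icc_of_mem_stdSimplex hp i).2
    _ = 1 := hq.2

/-- The regularization term `τ (⟪π, p⟫ - ‖π‖²)` of the inequality is at most `τ`. -/
theorem sum_mul_le_add_of_regularized_vi {ι : Type*} [Fintype ι] {g π : ι → ℝ} {τ : ℝ}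
    (hτ : 0 ≤ τ) (hπ : π ∈ stdSimplex ℝ ι)
    (hVI : ∀ p ∈ stdSimplex ℝ ι, 0 ≤ ∑ i, (g i - τ * π i) * (π i - p i))
    {p : ι → ℝ} (hp : p ∈ stdSimplex ℝ ι) :
    ∑ i, p i * g i ≤ ∑ i, π i * g i + τ := by
  have hexpand : ∑ i, (g i - τ * π i) * (π i - p i)
      = ∑ i, π i * g i - ∑ i, p i * g i - τ * (∑ i, π i * π i - ∑ i, π i * p i) := by
    simp only [mul_sub, mul_sum, ← sum_sub_distrib]
    exact sum_congr rfl fun i _ => by ring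
  have hoverlap : ∑ i, π i * p i ≤ 1 := sum_mul_le_one_of_mem_stdSimplex hπ hp
  have hnorm : 0 ≤ ∑ i, π i * π i := sum_nonneg fun i _ => mul_self_nonneg (π i)
  have hreg : τ * (∑ i, π i * p i - ∑ i, π i * π i) ≤ τ :=
    mul_le_of_le_one_right hτ (by linarith)
  linarith [hVI p hp]

theorem stmt5_general (K : ℕ) (τ : ℝ) (hτ : 0 < τ)
    (F : EuclideanSpace ℝ (Fin K) → EuclideanSpace ℝ (Fin K))
    (πτ : EuclideanSpace ℝ (Fin K)) (hπτ : πτ ∈ simplex K)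
    (hRVI : ∀ p ∈ simplex K, 0 ≤ ∑ a : Fin K, (F πτ a - τ * πτ a) * (πτ a - p a)) :
    (⨆ p : simplex K, ∑ a : Fin K, (p : EuclideanSpace ℝ (Fin K)) a * F πτ a) - 2 * τ
      ≤ ∑ a : Fin K, πτ a * F πτ a := by
  have : Nonempty (simplex K) := ⟨⟨πτ, hπτ⟩⟩
  have hbest : ∀ p : simplex K, ∑ a, (p : EuclideanSpace ℝ (Fin K)) a * F πτ a
      ≤ ∑ a, πτ a * F πτ a + τ := fun p =>
    sum_mul_le_add_of_regularized_vi hτ.le (mem_simplex_iff.mp hπτ)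
      (fun q hq => hRVI (WithLp.toLp 2 q) (mem_simplex_iff.mpr hq)) (mem_simplex_iff.mp p.2)
  linarith [ciSup_le hbest]

/-- If `π*_τ ∈ Δ_A` solves the `τ`-Tikhonov-regularized variational inequality
`(F(π*_τ) − τπ*_τ)ᵀ(π*_τ − π) ≥ 0` for all `π ∈ Δ_A`, then `π*_τ` is a `2τ`-MF-NE of `F`:
`∑_a π*_τ(a) F(π*_τ, a) ≥ max_{π∈Δ_A} ∑_a π(a) F(π*_τ, a) − 2τ`. -/
theorem stmt5 (K : ℕ) (hK : 0 < K) (τ : ℝ) (hτ : 0 < τ)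
    (F : EuclideanSpace ℝ (Fin K) → EuclideanSpace ℝ (Fin K))
    (hFmap : ∀ μ ∈ simplex K, ∀ a : Fin K, F μ a ∈ Set.Icc (0 : ℝ) 1)
    (πτ : EuclideanSpace ℝ (Fin K)) (hπτ : πτ ∈ simplex K)
    (hRVI : ∀ p ∈ simplex K, 0 ≤ ∑ a : Fin K, (F πτ a - τ * πτ a) * (πτ a - p a)) :
    (⨆ p : simplex K, ∑ a : Fin K, (p : EuclideanSpace ℝ (Fin K)) a * F πτ a) - 2 * τ
      ≤ ∑ a : Fin K, πτ a * F πτ a :=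
  stmt5_general K τ hτ F πτ hπτ hRVI
end
end

section
/- For each a ∈ A let F_a : [0,1] → [0,1] be non-increasing, and suppose there exists λ > 0 such that |F_a(x) − F_a(x′)| ≥ λ|x − x′| for all x, x′ ∈ [0,1] and all a ∈ A. Define F : Δ_A → [0,1]^K by F(μ, a) = F_a(μ(a)). Then F is λ-strongly monotone: (F(μ₁) − F(μ₂))ᵀ(μ₁ − μ₂) ≤ −λ‖μ₁ − μ₂‖₂² for all μ₁, μ₂ ∈ Δ_A. -/
open scoped BigOperators
open Finset

noncomputable section

lemma simplex_mem_Icc {K : ℕ} {μ : EuclideanSpace ℝ (Fin K)} (h : μ ∈ simplex K) (a : Fin K) :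
    μ a ∈ Set.Icc (0 : ℝ) 1 := by
  obtain ⟨h0, hs⟩ := h
  refine ⟨h0 a, ?_⟩
  have : μ a ≤ ∑ b, μ b := Finset.single_le_sum (fun b _ => h0 b) (Finset.mem_univ a)
  linarith

/-- Example 1 of the paper: strictly decreasing payoffs.
For each `a ∈ A`, let `F_a : [0,1] → [0,1]` be non-increasing with
`|F_a(x) − F_a(x′)| ≥ λ|x − x′|` for some `λ > 0`, and define `F(μ, a) = F_a(μ(a))`.
Then `F` is `λ`-strongly monotone on `Δ_A`. -/
theorem stmt10 (K : ℕ) (hK : 0 < K) (lam : ℝ) (hlam : 0 < lam)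
    (Fa : Fin K → ℝ → ℝ)
    (hmap : ∀ a : Fin K, ∀ x ∈ Set.Icc (0 : ℝ) 1, Fa a x ∈ Set.Icc (0 : ℝ) 1)
    (hmono : ∀ a : Fin K, ∀ x ∈ Set.Icc (0 : ℝ) 1, ∀ y ∈ Set.Icc (0 : ℝ) 1,
      x ≤ y → Fa a y ≤ Fa a x)
    (hsep : ∀ a : Fin K, ∀ x ∈ Set.Icc (0 : ℝ) 1, ∀ y ∈ Set.Icc (0 : ℝ) 1,
      lam * |x - y| ≤ |Fa a x - Fa a y|)
    (F : EuclideanSpace ℝ (Fin K) → EuclideanSpace ℝ (Fin K))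
    (hF : ∀ μ : EuclideanSpace ℝ (Fin K), ∀ a : Fin K, F μ a = Fa a (μ a)) :
    ∀ μ₁ ∈ simplex K, ∀ μ₂ ∈ simplex K,
      ∑ a : Fin K, (F μ₁ a - F μ₂ a) * (μ₁ a - μ₂ a) ≤ -lam * ‖μ₁ - μ₂‖ ^ 2 := by
  intro μ₁ h₁ μ₂ h₂
  have hnorm : ‖μ₁ - μ₂‖ ^ 2 = ∑ a : Fin K, (μ₁ a - μ₂ a) ^ 2 := by
    rw [EuclideanSpace.norm_eq, Real.sq_sqrt (by positivity)]
    congr 1; ext a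
    simp [sq_abs]
  rw [hnorm, neg_mul, Finset.mul_sum, ← Finset.sum_neg_distrib]
  apply Finset.sum_le_sum
  intro a _
  rw [hF, hF]
  have hx := simplex_mem_Icc h₁ a
  have hy := simplex_mem_Icc h₂ a
  set x := μ₁ a
  set y := μ₂ a
  have key : (Fa a x - Fa a y) * (x - y) ≤ -(lam * (x - y) ^ 2) := by
    rcases le_total x y with hle | hle
    · have hF' : Fa a y ≤ Fa a x := hmono a x hx y hy hle
      have hs := hsep a x hx y hy
      rw [abs_of_nonpos (by linarith), abs_of_nonneg (by linarith)] at hs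
      nlinarith [sq_nonneg (x - y)]
    · have hF' : Fa a x ≤ Fa a y := hmono a y hy x hx hle
      have hs := hsep a x hx y hy
      rw [abs_of_nonneg (by linarith), abs_of_nonpos (by linarith)] at hs
      nlinarith [sq_nonneg (x - y)]
  exact key
end
end

section
/- Let N = 3 and A = {1, 2, 3}, and define F : Δ_A → ℝ³ by F(μ₁, μ₂, μ₃) = (−μ₁ − μ₂, μ₁, −μ₃). For an action profile a = (a¹, a², a³) ∈ A³ let μ̂(a) = (1/3)(e_{a¹} + e_{a²} + e_{a³}) ∈ Δ_A be its empirical distribution, and define the deterministic payoff of player i by V^i(a) = F(μ̂(a))(a^i). Then (i) F is monotone, i.e. (F(μ) − F(μ′))ᵀ(μ − μ′) ≤ 0 for all μ, μ′ ∈ Δ_A, and (ii) there exists no function P : A³ → ℝ such that V^i(a, a^{−i}) − V^i(a′, a^{−i}) = P(a, a^{−i}) − P(a′, a^{−i}) for all players i ∈ {1,2,3}, all profiles in A³, and all actions a, a′ ∈ A; that is, this monotone static mean-field game is not a potential game. -/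
open scoped BigOperators
open Finset

noncomputable section

/-- The payoff map `F(μ₁, μ₂, μ₃) = (−μ₁ − μ₂, μ₁, −μ₃)` on `ℝ³`. -/
def F11 : EuclideanSpace ℝ (Fin 3) → EuclideanSpace ℝ (Fin 3) :=
  fun μ => WithLp.toLp 2 ![-(μ 0) - μ 1, μ 0, -(μ 2)]

/-- Empirical distribution `μ̂(a) = (1/3)(e_{a¹} + e_{a²} + e_{a³})` of an action profile. -/
def emp11 (v : Fin 3 → Fin 3) : EuclideanSpace ℝ (Fin 3) :=
  (3 : ℝ)⁻¹ • ∑ j : Fin 3, EuclideanSpace.single (v j) (1 : ℝ)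

/-- Deterministic payoff `V^i(a) = F(μ̂(a))(a^i)` of player `i`. -/
def V11 (v : Fin 3 → Fin 3) (i : Fin 3) : ℝ := F11 (emp11 v) (v i)

/-!
Monotonicity: the off-diagonal part of the linear map `F` is antisymmetric, so
`⟨F μ − F ν, μ − ν⟩ = −(d₁² + d₃²)` with `d = μ − ν`.

No potential: an exact potential makes the payoff changes along any closed cycle of unilateral
deviations telescope to zero. The same antisymmetry (`∂F₁/∂μ₂ = −1` but `∂F₂/∂μ₁ = 1`) breaks this
on the cycle in which players 1 and 2 switch between actions while player 3 stays put.
-/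

theorem sum_F11_sub_mul_sub (μ ν : EuclideanSpace ℝ (Fin 3)) :
    ∑ a : Fin 3, (F11 μ a - F11 ν a) * (μ a - ν a) = -((μ 0 - ν 0) ^ 2 + (μ 2 - ν 2) ^ 2) := by
  simp only [F11, Fin.sum_univ_three, Matrix.cons_val_zero, Matrix.cons_val_one,
    Matrix.cons_val_two, Matrix.head_cons, Matrix.tail_cons]
  ring

theorem F11_monotone (μ ν : EuclideanSpace ℝ (Fin 3)) :
    ∑ a : Fin 3, (F11 μ a - F11 ν a) * (μ a - ν a) ≤ 0 := by
  rw [sum_F11_sub_mul_sub, neg_nonpos]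
  positivity

section ExactPotential

variable {ι α : Type*} [DecidableEq ι]

def IsExactPotential (V : (ι → α) → ι → ℝ) (P : (ι → α) → ℝ) : Prop :=
  ∀ (i : ι) (prof : ι → α) (a a' : α),
    V (Function.update prof i a) i - V (Function.update prof i a') i
      = P (Function.update prof i a) - P (Function.update prof i a')

theorem IsExactPotential.apply_sub_apply {V : (ι → α) → ι → ℝ} {P : (ι → α) → ℝ}
    (hP : IsExactPotential V P) {i : ι} {q q' : ι → α} (h : ∀ k ≠ i, q k = q' k) :
    V q i - V q' i = P q - P q' := by
  have hq : Function.update q' i (q i) = q := by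
    ext k
    by_cases hk : k = i
    · subst hk; simp
    · simp [hk, h k hk]
  simpa [hq] using hP i q' (q i) (q' i)

end ExactPotential

/-- Remark 2 of the paper: a monotone SMFG that is not a potential game.
With `N = 3`, `A = {1,2,3}` and `F(μ₁,μ₂,μ₃) = (−μ₁−μ₂, μ₁, −μ₃)`: (i) `F` is monotone, and
(ii) there is no potential `P : A³ → ℝ` with
`V^i(a, a^{−i}) − V^i(a′, a^{−i}) = P(a, a^{−i}) − P(a′, a^{−i})` for all `i`, profiles, and
actions `a, a′`. -/
theorem stmt11 :
    (∀ μ₁ ∈ simplex 3, ∀ μ₂ ∈ simplex 3,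
        ∑ a : Fin 3, (F11 μ₁ a - F11 μ₂ a) * (μ₁ a - μ₂ a) ≤ 0)
    ∧ ¬ ∃ P : (Fin 3 → Fin 3) → ℝ,
        ∀ (i : Fin 3) (prof : Fin 3 → Fin 3) (a a' : Fin 3),
          V11 (Function.update prof i a) i - V11 (Function.update prof i a') i
            = P (Function.update prof i a) - P (Function.update prof i a') := by
  refine ⟨fun μ₁ _ μ₂ _ => F11_monotone μ₁ μ₂, ?_⟩
  rintro ⟨P, hP⟩
  have hV : IsExactPotential V11 P := hP
  -- The cycle (0,0,2) → (2,0,2) → (2,1,2) → (0,1,2) → (0,0,2); its payoff changes sum to 2/3.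
  have h₁ := hV.apply_sub_apply (i := 0) (q := ![0, 0, 2]) (q' := ![2, 0, 2]) (by decide)
  have h₂ := hV.apply_sub_apply (i := 1) (q := ![2, 0, 2]) (q' := ![2, 1, 2]) (by decide)
  have h₃ := hV.apply_sub_apply (i := 0) (q := ![2, 1, 2]) (q' := ![0, 1, 2]) (by decide)
  have h₄ := hV.apply_sub_apply (i := 1) (q := ![0, 1, 2]) (q' := ![0, 0, 2]) (by decide)
  norm_num [V11, F11, emp11, PiLp.single_apply, Fin.sum_univ_three, Matrix.cons_val_two,
    Matrix.tail_cons, Matrix.head_cons, Fin.ext_iff] at h₁ h₂ h₃ h₄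
  linarith
end
end

section
/- Let c₀ ≥ 0, c₁ ≥ 0, γ > 1, and a ≥ γ be constants, and let (u_t)_{t≥0} be a sequence of non-negative reals such that u_{t+1} ≤ c₀/(t + a) + c₁/(t + a)² + (1 − γ/(t + a)) u_t for all t ≥ 0. Then for all t ≥ 0, u_{t+1} ≤ [u₀ a^γ + c₁(a^{γ−2} + 1)(1 + a^{−1})^γ + c₀(1 + a^{−1})^γ a^{γ−1}]/(t + a)^γ + [c₀ + c₁(1 + a^{−1})^γ (γ − 1)^{−1}]/(t + a) + c₁/(t + a)² + γ^{−1}(1 + a^{−1})^γ c₀. -/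
/-! The bound `V(x) = decayBound γ A B c₁ C x = A / x ^ γ + B / x + c₁ / x ^ 2 + C` is a
supersolution of the recurrence:
`c₀ / (x + 1) + c₁ / (x + 1) ^ 2 + (1 - γ / (x + 1)) V(x) ≤ V(x + 1)` for every `x > 0`, as soon as
`A ≥ 0`, `c₀ ≤ γ C` and `c₁ ≤ (γ - 1) B`. The power term is handled by Bernoulli's inequality
`1 - γ / (x + 1) ≤ (x / (x + 1)) ^ γ`; the remaining terms reduce to a quadratic in `x` with
non-negative coefficients. Since `1 - γ / (t + a) ≥ 0` for `a ≥ γ`, induction gives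
`u t ≤ V(t + a - 1)` once `u 0 ≤ V(a - 1)`. The constants of the theorem satisfy all these
conditions because `(1 + a⁻¹) ^ γ ≥ 1`. -/

open Real

noncomputable def decayBound (γ A B c₁ C x : ℝ) : ℝ :=
  A / x ^ γ + B / x + c₁ / x ^ 2 + C

lemma one_sub_div_add_one_le_rpow {x γ : ℝ} (hx : 0 ≤ x) (hγ : 1 ≤ γ) :
    1 - γ / (x + 1) ≤ (x / (x + 1)) ^ γ := by
  have hs : -1 ≤ -(x + 1)⁻¹ := neg_le_neg (inv_le_one_of_one_le₀ (by linarith))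
  calc 1 - γ / (x + 1) = 1 + γ * -(x + 1)⁻¹ := by ring
    _ ≤ (1 + -(x + 1)⁻¹) ^ γ := one_add_mul_self_le_rpow_one_add hs hγ
    _ = (x / (x + 1)) ^ γ := by field_simp; ring_nf

lemma one_sub_div_add_one_mul_div_rpow_le {x γ A : ℝ} (hx : 0 < x) (hγ : 1 ≤ γ) (hA : 0 ≤ A) :
    (1 - γ / (x + 1)) * (A / x ^ γ) ≤ A / (x + 1) ^ γ := by
  calc (1 - γ / (x + 1)) * (A / x ^ γ) ≤ (x / (x + 1)) ^ γ * (A / x ^ γ) :=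
        mul_le_mul_of_nonneg_right (one_sub_div_add_one_le_rpow hx.le hγ) (by positivity)
    _ = A / (x + 1) ^ γ := by
        rw [div_rpow hx.le (by linarith)]
        field_simp

lemma rational_step_le {x γ c₀ c₁ B C : ℝ} (hx : 0 < x) (hγ : 1 ≤ γ) (hc₁ : 0 ≤ c₁)
    (hC : c₀ ≤ γ * C) (hB : c₁ ≤ B * (γ - 1)) :
    c₀ / (x + 1) + (1 - γ / (x + 1)) * (B / x + c₁ / x ^ 2 + C) ≤ B / (x + 1) + C := by
  have hnum : 0 ≤ (γ * C - c₀) * x ^ 2 + (B * (γ - 1) - c₁) * x + c₁ * (γ - 1) := by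
    have := mul_nonneg hc₁ (sub_nonneg.2 hγ)
    have := mul_nonneg (sub_nonneg.2 hB) hx.le
    have := mul_nonneg (sub_nonneg.2 hC) (sq_nonneg x)
    linarith
  have hdiff : B / (x + 1) + C - (c₀ / (x + 1) + (1 - γ / (x + 1)) * (B / x + c₁ / x ^ 2 + C))
      = ((γ * C - c₀) * x ^ 2 + (B * (γ - 1) - c₁) * x + c₁ * (γ - 1)) / (x ^ 2 * (x + 1)) := by
    field_simp
    ring
  have : 0 ≤ B / (x + 1) + C - (c₀ / (x + 1) + (1 - γ / (x + 1)) * (B / x + c₁ / x ^ 2 + C)) := by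
    rw [hdiff]
    positivity
  linarith

lemma decayBound_step_le {x γ c₀ c₁ A B C : ℝ} (hx : 0 < x) (hγ : 1 ≤ γ) (hc₁ : 0 ≤ c₁)
    (hA : 0 ≤ A) (hC : c₀ ≤ γ * C) (hB : c₁ ≤ B * (γ - 1)) :
    c₀ / (x + 1) + c₁ / (x + 1) ^ 2 + (1 - γ / (x + 1)) * decayBound γ A B c₁ C x
      ≤ decayBound γ A B c₁ C (x + 1) := by
  have hpow := one_sub_div_add_one_mul_div_rpow_le hx hγ hA
  have hrat := rational_step_le hx hγ hc₁ hC hB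
  unfold decayBound
  linarith [show (1 - γ / (x + 1)) * (A / x ^ γ + B / x + c₁ / x ^ 2 + C)
      = (1 - γ / (x + 1)) * (A / x ^ γ) + (1 - γ / (x + 1)) * (B / x + c₁ / x ^ 2 + C) by ring]

lemma le_decayBound_sub_one {γ a v A B c₁ C : ℝ} (hγ : 0 ≤ γ) (ha : 1 < a) (hv : 0 ≤ v)
    (hA : v * a ^ γ ≤ A) (hB : 0 ≤ B) (hc₁ : 0 ≤ c₁) (hC : 0 ≤ C) :
    v ≤ decayBound γ A B c₁ C (a - 1) := by
  have ha₁ : 0 < a - 1 := by linarith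
  have hpow : v ≤ A / (a - 1) ^ γ := by
    rw [le_div_iff₀ (rpow_pos_of_pos ha₁ γ)]
    exact (mul_le_mul_of_nonneg_left (rpow_le_rpow ha₁.le (by linarith) hγ) hv).trans hA
  have : 0 ≤ B / (a - 1) + c₁ / (a - 1) ^ 2 + C := by positivity
  unfold decayBound
  linarith

lemma le_decayBound_of_recurrence {c₀ c₁ γ a A B C : ℝ} {u : ℕ → ℝ} (hγ : 1 < γ) (ha : γ ≤ a)
    (hc₁ : 0 ≤ c₁) (hA : 0 ≤ A) (hC : c₀ ≤ γ * C) (hB : c₁ ≤ B * (γ - 1))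
    (hrec : ∀ t : ℕ, u (t + 1)
      ≤ c₀ / ((t : ℝ) + a) + c₁ / ((t : ℝ) + a) ^ 2 + (1 - γ / ((t : ℝ) + a)) * u t)
    (h₀ : u 0 ≤ decayBound γ A B c₁ C (a - 1)) (t : ℕ) :
    u t ≤ decayBound γ A B c₁ C (t + a - 1) := by
  induction t with
  | zero => simpa using h₀
  | succ t ih =>
    have hx : 0 < (t : ℝ) + a - 1 := by linarith [show (0 : ℝ) ≤ t from t.cast_nonneg]
    have hfac : 0 ≤ 1 - γ / ((t : ℝ) + a) := by
      rw [sub_nonneg, div_le_one (by linarith)]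
      linarith [show (0 : ℝ) ≤ t from t.cast_nonneg]
    have hstep := decayBound_step_le hx hγ.le hc₁ hA hC hB
    rw [sub_add_cancel] at hstep
    have hmono := mul_le_mul_of_nonneg_left ih hfac
    push_cast
    rw [add_sub_right_comm, add_sub_cancel_right]
    linarith [hrec t]

/-- Lemma 10 of the paper: general error recurrence.
Let `c₀, c₁ ≥ 0`, `γ > 1`, `a ≥ γ`, and let `(u_t)` be non-negative reals with
`u_{t+1} ≤ c₀/(t+a) + c₁/(t+a)² + (1 − γ/(t+a))u_t` for all `t ≥ 0`. Then for all `t ≥ 0`,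
`u_{t+1} ≤ [u₀a^γ + c₁(a^{γ−2}+1)(1+a⁻¹)^γ + c₀(1+a⁻¹)^γ a^{γ−1}]/(t+a)^γ
  + [c₀ + c₁(1+a⁻¹)^γ(γ−1)⁻¹]/(t+a) + c₁/(t+a)² + γ⁻¹(1+a⁻¹)^γ c₀`. -/
theorem stmt16 (c₀ c₁ γ a : ℝ) (hc₀ : 0 ≤ c₀) (hc₁ : 0 ≤ c₁) (hγ : 1 < γ) (ha : γ ≤ a)
    (u : ℕ → ℝ) (hu : ∀ t, 0 ≤ u t)
    (hrec : ∀ t : ℕ, u (t + 1)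
      ≤ c₀ / ((t : ℝ) + a) + c₁ / ((t : ℝ) + a) ^ 2 + (1 - γ / ((t : ℝ) + a)) * u t) :
    ∀ t : ℕ, u (t + 1)
      ≤ (u 0 * a ^ γ + c₁ * (a ^ (γ - 2) + 1) * (1 + a⁻¹) ^ γ
            + c₀ * (1 + a⁻¹) ^ γ * a ^ (γ - 1)) / ((t : ℝ) + a) ^ γ
        + (c₀ + c₁ * (1 + a⁻¹) ^ γ * (γ - 1)⁻¹) / ((t : ℝ) + a)
        + c₁ / ((t : ℝ) + a) ^ 2
        + γ⁻¹ * (1 + a⁻¹) ^ γ * c₀ := by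
  have ha₀ : 0 < a := by linarith
  have hγ₁ : 0 < γ - 1 := by linarith
  set K := (1 + a⁻¹) ^ γ
  have hK₁ : 1 ≤ K := one_le_rpow (by simp [ha₀.le]) (by linarith)
  have hK₀ : 0 ≤ K := by linarith
  have hA : u 0 * a ^ γ ≤ u 0 * a ^ γ + c₁ * (a ^ (γ - 2) + 1) * K + c₀ * K * a ^ (γ - 1) := by
    have := rpow_nonneg ha₀.le (γ - 2)
    have := rpow_nonneg ha₀.le (γ - 1)
    rw [add_assoc]
    exact le_add_of_nonneg_right (by positivity)
  have hC : c₀ ≤ γ * (γ⁻¹ * K * c₀) := by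
    rw [← mul_assoc, ← mul_assoc, mul_inv_cancel₀ (by linarith), one_mul]
    exact le_mul_of_one_le_left hc₀ hK₁
  have hB : c₁ ≤ (c₀ + c₁ * K * (γ - 1)⁻¹) * (γ - 1) := by
    rw [add_mul, mul_assoc (c₁ * K), inv_mul_cancel₀ hγ₁.ne', mul_one]
    nlinarith [mul_nonneg hc₀ hγ₁.le]
  have h₀ := le_decayBound_sub_one (by linarith) (by linarith) (hu 0) hA
    (by positivity : 0 ≤ c₀ + c₁ * K * (γ - 1)⁻¹) hc₁
    (by positivity : 0 ≤ γ⁻¹ * K * c₀)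
  have hA₀ := (mul_nonneg (hu 0) (rpow_nonneg ha₀.le γ)).trans hA
  intro t
  have := le_decayBound_of_recurrence hγ ha hc₁ hA₀ hC hB hrec h₀ (t + 1)
  rwa [show ((t + 1 : ℕ) : ℝ) + a - 1 = t + a by push_cast; ring] at this
end
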